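/- arXiv:2011.01835 — 2 statements merged into one kernel-verified Lean document; each statement's English description precedes it below -/
import Mathlib

section
/- Let X₀ be a uniformly discrete subset of a locally compact second countable group G. Then there exists a Borel section s : Ω^ext_{X₀} \ {∅} → G, i.e. a Borel measurable map such that s(X) ∈ X for every nonempty X ∈ Ω^ext_{X₀}. -/
open scoped Pointwise ENNReal NNReal
open MeasureTheory

/-- The space of closed subsets of a topological space. -/
def CFSp (G : Type*) [TopologicalSpace G] := {A : Set G // IsClosed A}

namespace CFSp

variable {G : Type*} [TopologicalSpace G]

/-- The Chabauty–Fell topology on the space of closed subsets. -/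
instance : TopologicalSpace (CFSp G) :=
  TopologicalSpace.generateFrom
    ({s | ∃ K : Set G, IsCompact K ∧ s = {C : CFSp G | C.1 ∩ K = ∅}} ∪
     {s | ∃ V : Set G, IsOpen V ∧ s = {C : CFSp G | (C.1 ∩ V).Nonempty}})

instance : MeasurableSpace (CFSp G) := borel (CFSp G)

instance : BorelSpace (CFSp G) := ⟨rfl⟩

/-- Left translation action of a topological group on its closed subsets. -/
noncomputable instance [Group G] [IsTopologicalGroup G] : SMul G (CFSp G) :=
  ⟨fun g X => ⟨g • X.1, X.2.smul g⟩⟩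

/-- Constructor. -/
def mk (A : Set G) (h : IsClosed A) : CFSp G := ⟨A, h⟩

end CFSp

/-- The extended invariant hull. -/
def extHull {G : Type*} [TopologicalSpace G] [Group G] (X₀ : Set G) : Set (CFSp G) :=
  {X : CFSp G | X.1⁻¹ * X.1 ⊆ closure (X₀⁻¹ * X₀)}

/-- The empty set as a closed subset. -/
def emptyCF (G : Type*) [TopologicalSpace G] : CFSp G := ⟨∅, isClosed_empty⟩

/-- Approximate subgroup. -/
def IsApproxSubgroup {G : Type*} [Group G] (Λ : Set G) : Prop :=
  (1 : G) ∈ Λ ∧ Λ⁻¹ = Λ ∧ ∃ F : Set G, F.Finite ∧ Λ * Λ ⊆ F * Λ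

/-- Uniformly discrete subset: the identity is isolated in X⁻¹X. -/
def UniformlyDiscrete {G : Type*} [TopologicalSpace G] [Group G] (X : Set G) : Prop :=
  ∃ V ∈ nhds (1 : G), V ∩ (X⁻¹ * X) ⊆ {1}

/-- A proper `G`-invariant Borel probability measure concentrated on `Ω ⊆ 𝒞(G)`. -/
def IsInvariantProperProb {G : Type*} [TopologicalSpace G] [Group G] [IsTopologicalGroup G]
    (Ω : Set (CFSp G)) (ν : Measure (CFSp G)) : Prop :=
  IsProbabilityMeasure ν ∧ ν Ωᶜ = 0 ∧ ν {emptyCF G} = 0 ∧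
    ∀ g : G, Measure.map (fun X : CFSp G => g • X) ν = ν

/-- ⋆-approximate lattice. -/
def IsStarApproxLattice {G : Type*} [TopologicalSpace G] [Group G] [IsTopologicalGroup G]
    (Λ : Set G) : Prop :=
  IsApproxSubgroup Λ ∧ UniformlyDiscrete Λ ∧
    ∃ ν : Measure (CFSp G), IsInvariantProperProb (extHull Λ) ν

/-- Ergodicity of a measure on `𝒞(G)` under the translation action. -/
def ErgodicMeas {G : Type*} [TopologicalSpace G] [Group G] [IsTopologicalGroup G]
    (ν : Measure (CFSp G)) : Prop :=
  ∀ s : Set (CFSp G), MeasurableSet s → (∀ g : G, (fun X : CFSp G => g • X) ⁻¹' s = s) →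
    ν s = 0 ∨ ν sᶜ = 0

/-- Commensurability of subsets of a group. -/
def AreCommensurable {G : Type*} [Group G] (X Y : Set G) : Prop :=
  ∃ F : Set G, F.Finite ∧ X ⊆ F * Y ∧ Y ⊆ F * X

/-- Finite local complexity: `X⁻¹X` is locally finite. -/
def FiniteLocalComplexity {G : Type*} [TopologicalSpace G] [Group G] (X : Set G) : Prop :=
  ∀ K : Set G, IsCompact K → ((X⁻¹ * X) ∩ K).Finite

/-!
Uniform discreteness of `X₀` gives an open neighbourhood `V` of `1` such that any two points
`y, z` of a set `X` in the extended hull with `y⁻¹z ∈ V` are topologically indistinguishable.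
Cover `G` by countably many open sets `Uₙ` with `Uₙ⁻¹Uₙ ⊆ V` and let `s(X)` be any point of
`X ∩ Uₙ` for the least `n` with `X ∩ Uₙ ≠ ∅`. All choices of that point lie in the same open
sets, so `s(X) ∈ O` iff `X` meets `Uₙ ∩ O`, a Borel condition in the Chabauty–Fell topology.
-/

open Set Topology MeasureTheory
open scoped Pointwise

theorem exists_measurable_selection_of_inseparable {α G : Type*} [MeasurableSpace α]
    [TopologicalSpace G] [MeasurableSpace G] [BorelSpace G] (A : α → Set G) {U : ℕ → Set G}
    (hU : ∀ n, IsOpen (U n)) (hA : ∀ x, ∃ n, (A x ∩ U n).Nonempty)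
    (hmeas : ∀ O, IsOpen O → MeasurableSet {x | (A x ∩ O).Nonempty})
    (hinsep : ∀ x n, ∀ y ∈ A x ∩ U n, ∀ z ∈ A x ∩ U n, Inseparable y z) :
    ∃ s : α → G, Measurable s ∧ ∀ x, s x ∈ A x := by
  classical
  set N : α → ℕ := fun x => Nat.find (hA x)
  have hN : Measurable N := measurable_find hA fun k => hmeas _ (hU k)
  set s : α → G := fun x => (Nat.find_spec (hA x)).some
  have hs : ∀ x, s x ∈ A x ∩ U (N x) := fun x => (Nat.find_spec (hA x)).some_mem
  refine ⟨s, measurable_of_isOpen fun O hO => ?_, fun x => (hs x).1⟩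
  have hpre : s ⁻¹' O = ⋃ n, N ⁻¹' {n} ∩ {x | (A x ∩ (U n ∩ O)).Nonempty} := by
    ext x
    simp only [mem_preimage, mem_iUnion, mem_inter_iff, mem_singleton_iff, mem_ofPred_eq]
    constructor
    · exact fun h => ⟨N x, rfl, s x, (hs x).1, (hs x).2, h⟩
    · rintro ⟨n, rfl, z, hzA, hzU, hzO⟩
      exact ((hinsep x _ _ (hs x) z ⟨hzA, hzU⟩).mem_open_iff hO).2 hzO
  rw [hpre]
  exact .iUnion fun n => (hN (measurableSet_singleton n)).inter (hmeas _ ((hU n).inter hO))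

theorem CFSp.isOpen_setOf_inter_nonempty {G : Type*} [TopologicalSpace G] {U : Set G}
    (hU : IsOpen U) :
    IsOpen {C : CFSp G | (C.1 ∩ U).Nonempty} :=
  TopologicalSpace.GenerateOpen.basic _ (Or.inr ⟨U, hU, rfl⟩)

section TopologicalGroup

variable {G : Type*} [Group G] [TopologicalSpace G] [IsTopologicalGroup G]

theorem inseparable_of_inv_mul_mem_closure_one {x y : G} (h : x⁻¹ * y ∈ closure (1 : Set G)) :
    Inseparable x y := by
  have : Inseparable x⁻¹ y⁻¹ := group_inseparable_iff.2 (by simpa [div_eq_mul_inv] using h)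
  simpa using this.map continuous_inv

theorem exists_open_cover_inv_mul_mem [SecondCountableTopology G] {V : Set G} (hV : V ∈ 𝓝 1) :
    ∃ U : ℕ → Set G, (∀ n, IsOpen (U n)) ∧ (∀ x, ∃ n, x ∈ U n) ∧
      ∀ n, ∀ a ∈ U n, ∀ b ∈ U n, a⁻¹ * b ∈ V := by
  obtain ⟨W, hW, -, hWinv, hWV⟩ := exists_closed_nhds_one_inv_eq_mul_subset hV
  have hmem : ∀ x : G, x ∈ x • interior W :=
    fun x => ⟨1, mem_interior_iff_mem_nhds.2 hW, mul_one x⟩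
  obtain ⟨T, hTc, hT⟩ := TopologicalSpace.isOpen_iUnion_countable (fun x : G => x • interior W)
    fun x => isOpen_interior.smul x
  have hcover : ∀ x, ∃ g ∈ T, x ∈ g • interior W := fun x => by
    have hx : x ∈ ⋃ g ∈ T, g • interior W := hT ▸ mem_iUnion.2 ⟨x, hmem x⟩
    simpa only [mem_iUnion, exists_prop] using hx
  obtain ⟨g₁, hg₁, -⟩ := hcover 1
  obtain ⟨g, rfl⟩ := hTc.exists_eq_range ⟨g₁, hg₁⟩
  refine ⟨fun n => g n • interior W, fun n => isOpen_interior.smul _, fun x => ?_, ?_⟩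
  · obtain ⟨_, ⟨n, rfl⟩, hx⟩ := hcover x
    exact ⟨n, hx⟩
  · rintro n _ ⟨a, ha, rfl⟩ _ ⟨b, hb, rfl⟩
    have hab : (g n • a)⁻¹ * (g n • b) = a⁻¹ * b := by simp [smul_eq_mul, mul_assoc]
    rw [hab]
    exact hWV (mul_mem_mul (hWinv ▸ inv_mem_inv.2 (interior_subset ha)) (interior_subset hb))

theorem UniformlyDiscrete.exists_nhds_inseparable {X₀ : Set G} (h : UniformlyDiscrete X₀) :
    ∃ V ∈ 𝓝 (1 : G), ∀ X ∈ extHull X₀, ∀ y ∈ X.1, ∀ z ∈ X.1, y⁻¹ * z ∈ V → Inseparable y z := by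
  obtain ⟨V, hV, hVX₀⟩ := h
  obtain ⟨V', hV'V, hV'o, hV'1⟩ := mem_nhds_iff.1 hV
  refine ⟨V', hV'o.mem_nhds hV'1, fun X hX y hy z hz hyz => ?_⟩
  have hclosure : y⁻¹ * z ∈ closure (V' ∩ (X₀⁻¹ * X₀)) :=
    hV'o.inter_closure ⟨hyz, hX (mul_mem_mul (inv_mem_inv.2 hy) hz)⟩
  exact inseparable_of_inv_mul_mem_closure_one
    (closure_mono (fun g hg => hVX₀ ⟨hV'V hg.1, hg.2⟩) hclosure)

end TopologicalGroup

theorem statement15_general {G : Type*} [Group G] [TopologicalSpace G] [IsTopologicalGroup G]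
    [SecondCountableTopology G]
    [MeasurableSpace G] [BorelSpace G]
    (X₀ : Set G) (hud : UniformlyDiscrete X₀) :
    ∃ s : {X : CFSp G // X ∈ extHull X₀ ∧ X.1.Nonempty} → G,
      Measurable s ∧ ∀ X, s X ∈ X.1.1 := by
  obtain ⟨V, hV, hVinsep⟩ := hud.exists_nhds_inseparable
  obtain ⟨U, hUo, hUcover, hUV⟩ := exists_open_cover_inv_mul_mem hV
  refine exists_measurable_selection_of_inseparable
    (fun X => X.1.1 : {X : CFSp G // X ∈ extHull X₀ ∧ X.1.Nonempty} → Set G) hUo (fun X => ?_)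
    (fun O hO => measurable_subtype_coe (CFSp.isOpen_setOf_inter_nonempty hO).measurableSet)
    (fun X n y hy z hz => hVinsep X.1 X.2.1 y hy.1 z hz.1 (hUV n y hy.2 z hz.2))
  obtain ⟨x, hx⟩ := X.2.2
  obtain ⟨n, hn⟩ := hUcover x
  exact ⟨n, x, hx, hn⟩

/-- existence of a Borel section of `Ω^ext_{X₀} \ {∅}` when `X₀` is uniformly
discrete: a Borel measurable map `s` with `s(X) ∈ X` for every nonempty `X` in the extended
invariant hull. -/
theorem statement15 {G : Type*} [Group G] [TopologicalSpace G] [IsTopologicalGroup G]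
    [LocallyCompactSpace G] [SecondCountableTopology G]
    [MeasurableSpace G] [BorelSpace G]
    (X₀ : Set G) (hud : UniformlyDiscrete X₀) :
    ∃ s : {X : CFSp G // X ∈ extHull X₀ ∧ X.1.Nonempty} → G,
      Measurable s ∧ ∀ X, s X ∈ X.1.1 :=
  statement15_general X₀ hud
end

section
/- Let Λ be an approximate subgroup of some group that has property (T) (for approximate subgroups), with Kazhdan pair (Q, ε). Then the subgroup Λ^∞ generated by Λ is finitely generated; more precisely, Λ is covered by finitely many left translates of the subgroup Δ generated by Q. -/
open scoped Pointwise ENNReal NNReal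
open MeasureTheory

noncomputable section Statement19Aux

variable {X : Type*}

/-!
Let `H = ⟨Λ⟩` act on `H ⧸ Δ`, where `Δ = ⟨Q⟩ ∩ H`. In the permutation representation on
`ℓ²(H ⧸ Δ)` the indicator of the base coset is fixed by `Q`, so property (T) provides a unit vector
`ξ` with totally bounded `Λ`-orbit. Only finitely many coordinates of the vectors of a totally
bounded subset of `ℓ²` can be large, and `(λ • ξ) (λ • x) = ξ x`; hence `Λ • x` is finite as soon
as `ξ x ≠ 0`. Since `Λ g ⊆ C Λ` for some finite `C` whenever `g ∈ H`, the orbit of the base coset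
is finite too, i.e. `Λ ⊆ F Δ` with `F ⊆ Λ` finite, and then `H` is generated by `F ∪ Q`.
-/

open scoped lp

section lpCoordinates

variable {X : Type*} {E : X → Type*} [∀ x, NormedAddCommGroup (E x)] {p : ℝ≥0∞}

lemma lp.finite_setOf_le_norm_apply (hp : 0 < p.toReal) (f : lp E p) {c : ℝ} (hc : 0 < c) :
    {x | c ≤ ‖f x‖}.Finite := by
  have hsmall := ((memℓp_gen_iff hp).1 (lp.memℓp f)).tendsto_cofinite_zero.eventually
    (gt_mem_nhds (Real.rpow_pos_of_pos hc p.toReal))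
  refine (Filter.eventually_cofinite.1 hsmall).subset ?_
  intro x hx
  exact not_lt.2 (Real.rpow_le_rpow hc.le hx hp.le)

lemma TotallyBounded.finite_setOf_le_norm_apply [Fact (1 ≤ p)] (hp : 0 < p.toReal)
    {S : Set (lp E p)} (hS : TotallyBounded S) {c : ℝ} (hc : 0 < c) :
    {x | ∃ v ∈ S, c ≤ ‖v x‖}.Finite := by
  obtain ⟨t, ht, hSt⟩ := Metric.totallyBounded_iff.1 hS (c / 2) (half_pos hc)
  refine (ht.biUnion fun y _ => lp.finite_setOf_le_norm_apply hp y (half_pos hc)).subset ?_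
  rintro x ⟨v, hv, hvx⟩
  obtain ⟨y, hy, hvy⟩ := Set.mem_iUnion₂.1 (hSt hv)
  have hcoord : ‖v x - y x‖ ≤ ‖v - y‖ :=
    lp.norm_apply_le_norm (ENNReal.toReal_pos_iff.1 hp).1.ne' (v - y) x
  have hdist : ‖v - y‖ < c / 2 := by rwa [← dist_eq_norm, ← Metric.mem_ball]
  have := norm_sub_norm_le (v x) (y x)
  exact Set.mem_iUnion₂.2 ⟨y, hy, show c / 2 ≤ ‖y x‖ by linarith⟩

end lpCoordinates

section PermutationRepresentation

variable {X : Type*}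

lemma memℓp_comp_equiv {E : Type*} [NormedAddCommGroup E] {p : ℝ≥0∞} (hp : 0 < p.toReal)
    {f : X → E} (hf : Memℓp f p) (e : X ≃ X) : Memℓp (f ∘ e) p := by
  rw [memℓp_gen_iff hp] at hf ⊢
  exact e.summable_iff.2 hf

noncomputable def lpPermute (e : Equiv.Perm X) : ℓ²(X, ℂ) ≃ₗᵢ[ℂ] ℓ²(X, ℂ) where
  toFun f := ⟨f ∘ e.symm, memℓp_comp_equiv (by norm_num) (lp.memℓp f) e.symm⟩
  invFun f := ⟨f ∘ e, memℓp_comp_equiv (by norm_num) (lp.memℓp f) e⟩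
  map_add' _ _ := rfl
  map_smul' _ _ := rfl
  left_inv f := by ext x; simp
  right_inv f := by ext x; simp
  norm_map' f := by
    have h2 : 0 < (2 : ℝ≥0∞).toReal := by norm_num
    simp only [LinearEquiv.coe_mk, lp.norm_eq_tsum_rpow h2]
    congr 1
    exact e.symm.tsum_eq fun x => ‖f x‖ ^ (2 : ℝ≥0∞).toReal

noncomputable def lpPermuteHom : Equiv.Perm X →* (ℓ²(X, ℂ) ≃ₗᵢ[ℂ] ℓ²(X, ℂ)) where
  toFun := lpPermute
  map_one' := rfl
  map_mul' _ _ := rfl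

noncomputable def permRep (G X : Type*) [Group G] [MulAction G X] :
    G →* (ℓ²(X, ℂ) ≃ₗᵢ[ℂ] ℓ²(X, ℂ)) :=
  lpPermuteHom.comp (MulAction.toPermHom G X)

variable {G : Type*} [Group G] [MulAction G X]

@[simp]
lemma permRep_apply_apply (g : G) (f : ℓ²(X, ℂ)) (x : X) : permRep G X g f x = f (g⁻¹ • x) :=
  rfl

lemma permRep_single [DecidableEq X] (g : G) (x : X) (a : ℂ) :
    permRep G X g (lp.single 2 x a) = lp.single 2 (g • x) a := by
  ext y
  simp only [permRep_apply_apply, lp.single_apply, Pi.single_apply, inv_smul_eq_iff]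

lemma finite_image_smul_of_totallyBounded {S : Set G} {ξ : ℓ²(X, ℂ)}
    (hS : TotallyBounded ((fun g => permRep G X g ξ) '' S)) {x : X} (hx : ξ x ≠ 0) :
    ((· • x) '' S).Finite := by
  refine (hS.finite_setOf_le_norm_apply (by norm_num) (norm_pos_iff.2 hx)).subset ?_
  rintro _ ⟨g, hg, rfl⟩
  exact ⟨_, ⟨g, hg, rfl⟩, by simp⟩

end PermutationRepresentation

section ApproxSubgroup

variable {G : Type*} [Group G]

lemma IsApproxSubgroup.preimage_subtype {Λ : Set G} (hΛ : IsApproxSubgroup Λ) {H : Subgroup G}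
    (hΛH : Λ ⊆ H) : IsApproxSubgroup (((↑) : H → G) ⁻¹' Λ) := by
  obtain ⟨hone, hinv, F, hF, hΛΛ⟩ := hΛ
  refine ⟨hone, ?_, (↑) ⁻¹' F, hF.preimage Subtype.val_injective.injOn, ?_⟩
  · ext x
    simp only [Set.mem_inv, Set.mem_preimage, Subgroup.coe_inv]
    rw [← Set.mem_inv, hinv]
  rintro _ ⟨a, ha, b, hb, rfl⟩
  obtain ⟨f, hf, m, hm, hfm⟩ := hΛΛ (Set.mul_mem_mul ha hb)
  have hfH : f ∈ H := by
    rw [eq_mul_inv_of_mul_eq hfm]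
    exact mul_mem (a * b).2 (inv_mem (hΛH hm))
  exact ⟨⟨f, hfH⟩, hf, ⟨m, hΛH hm⟩, hm, Subtype.ext hfm⟩

lemma IsApproxSubgroup.exists_finite_mul_singleton_subset {Λ : Set G} (hΛ : IsApproxSubgroup Λ)
    {g : G} (hg : g ∈ Subgroup.closure Λ) : ∃ C : Set G, C.Finite ∧ Λ * {g} ⊆ C * Λ := by
  obtain ⟨-, hinv, F, hF, hΛΛ⟩ := hΛ
  have step : ∀ x ∈ Λ, ∀ y, (∃ C : Set G, C.Finite ∧ Λ * {y} ⊆ C * Λ) →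
      ∃ C : Set G, C.Finite ∧ Λ * {x * y} ⊆ C * Λ := by
    rintro x hx y ⟨C, hC, hy⟩
    refine ⟨F * C, hF.mul hC, ?_⟩
    calc Λ * {x * y} = Λ * {x} * {y} := by rw [← Set.singleton_mul_singleton, mul_assoc]
      _ ⊆ F * Λ * {y} := Set.mul_subset_mul_right
          ((Set.mul_subset_mul_left (Set.singleton_subset_iff.2 hx)).trans hΛΛ)
      _ ⊆ F * C * Λ := by rw [mul_assoc, mul_assoc]; exact Set.mul_subset_mul_left hy
  induction hg using Subgroup.closure_induction_left with
  | one => exact ⟨{1}, Set.finite_singleton 1, by simp⟩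
  | mul_left x hx y _ ih => exact step x hx y ih
  | inv_mul_cancel x hx y _ ih => exact step x⁻¹ (by rwa [← hinv, Set.inv_mem_inv]) y ih

end ApproxSubgroup

section Cosets

variable {G : Type*} [Group G]

lemma finite_image_smul_of_mul_singleton_subset {X : Type*} [MulAction G X] {S C : Set G}
    (hC : C.Finite) {g : G} (hg : S * {g} ⊆ C * S) {x : X} (hx : ((· • x) '' S).Finite) :
    ((· • g • x) '' S).Finite := by
  refine (hC.smul hx).subset ?_
  rintro _ ⟨s, hs, rfl⟩
  obtain ⟨c, hc, m, hm, hcm⟩ := hg (Set.mul_mem_mul hs rfl)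
  exact ⟨c, hc, m • x, ⟨m, hm, rfl⟩, by simp only [smul_smul, hcm]⟩

lemma exists_finite_subset_mul_of_finite_image_smul {D : Subgroup G} {S : Set G}
    (hS : ((· • ((1 : G) : G ⧸ D)) '' S).Finite) : ∃ F ⊆ S, F.Finite ∧ S ⊆ F * D := by
  obtain ⟨F, hFS, hF, hFeq⟩ := Set.exists_subset_image_finite_and.1 ⟨_, subset_rfl, hS, rfl⟩
  refine ⟨F, hFS, hF, fun s hs => ?_⟩
  obtain ⟨f, hf, hfs⟩ := hFeq.symm ▸ Set.mem_image_of_mem _ hs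
  simp only [MulAction.Quotient.smul_mk, smul_eq_mul, mul_one] at hfs
  exact ⟨f, hf, f⁻¹ * s, QuotientGroup.eq.1 hfs, mul_inv_cancel_left f s⟩

lemma subset_image_mul_of_preimage_subset_mul {H D : Subgroup G} {Λ : Set G} (hΛH : Λ ⊆ H)
    {F : Set H} (h : ((↑) : H → G) ⁻¹' Λ ⊆ F * D.subgroupOf H) : Λ ⊆ (↑) '' F * (D : Set G) := by
  intro l hl
  obtain ⟨f, hf, d, hd, hfd⟩ := h (show (⟨l, hΛH hl⟩ : H) ∈ _ from hl)
  exact ⟨f, ⟨f, hf, rfl⟩, d, hd, congrArg Subtype.val hfd⟩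

lemma Subgroup.closure_eq_closure_union_of_subset_mul {S F Q : Set G} (hFS : F ⊆ S)
    (hQS : Q ⊆ S) (hS : S ⊆ F * Subgroup.closure Q) :
    Subgroup.closure S = Subgroup.closure (F ∪ Q) := by
  refine le_antisymm ((Subgroup.closure_le _).2 fun s hs => ?_)
    (Subgroup.closure_mono (Set.union_subset hFS hQS))
  obtain ⟨f, hf, q, hq, rfl⟩ := hS hs
  exact mul_mem (Subgroup.subset_closure (Or.inl hf))
    (Subgroup.closure_mono Set.subset_union_right hq)

end Cosets

/-- an approximate subgroup with property (T) (for approximate subgroups), with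
Kazhdan pair `(Q, ε)`, generates a finitely generated group; more precisely `Λ` is covered by
finitely many left translates of the subgroup generated by `Q`. -/
theorem statement19 {Γ : Type u} [Group Γ] (Λ : Set Γ) (hΛ : IsApproxSubgroup Λ)
    (Q : Set Γ) (hQΛ : Q ⊆ Λ) (hQfin : Q.Finite) (ε : ℝ) (hε : 0 < ε)
    (hT : ∀ (E : Type u) [NormedAddCommGroup E] [InnerProductSpace ℂ E] [CompleteSpace E]
      (π : Subgroup.closure Λ →* (E ≃ₗᵢ[ℂ] E)),
      (∃ ξ : E, ‖ξ‖ = 1 ∧ ∀ γ : Subgroup.closure Λ, (γ : Γ) ∈ Q → ‖π γ ξ - ξ‖ < ε) →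
      ∃ ξ : E, ‖ξ‖ = 1 ∧
        TotallyBounded {v : E | ∃ γ : Subgroup.closure Λ, (γ : Γ) ∈ Λ ∧ π γ ξ = v}) :
    (Subgroup.closure Λ).FG ∧
    ∃ F : Set Γ, F.Finite ∧ Λ ⊆ F * ((Subgroup.closure Q : Subgroup Γ) : Set Γ) := by
  classical
  set H := Subgroup.closure Λ
  set X := H ⧸ (Subgroup.closure Q).subgroupOf H
  set δ : ℓ²(X, ℂ) := lp.single 2 ((1 : H) : X) 1
  have hinvariant : ∀ γ : H, (γ : Γ) ∈ Q → ‖permRep H X γ δ - δ‖ < ε := by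
    intro γ hγ
    have hfix : ((γ : H) : X) = ((1 : H) : X) :=
      QuotientGroup.eq.2 (by simpa [Subgroup.mem_subgroupOf] using Subgroup.subset_closure hγ)
    rw [permRep_single, MulAction.Quotient.smul_mk, smul_eq_mul, mul_one, hfix, sub_self,
      norm_zero]
    exact hε
  have hδ : ‖δ‖ = 1 := by rw [lp.norm_single (by norm_num), norm_one]
  obtain ⟨ξ, hξ, hTB⟩ := hT _ (permRep H X) ⟨δ, hδ, hinvariant⟩
  obtain ⟨x₀, hx₀⟩ : ∃ x, ξ x ≠ 0 := by
    by_contra! h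
    simp [show ξ = 0 from lp.ext (funext h)] at hξ
  obtain ⟨g₀, rfl⟩ := QuotientGroup.mk_surjective x₀
  -- `ξ` may vanish on the base coset: transport the finite orbit of `g₀ Δ` back to `Δ`.
  obtain ⟨C, hC, hΛg⟩ :=
    (hΛ.preimage_subtype Subgroup.subset_closure).exists_finite_mul_singleton_subset
      (g := g₀⁻¹) (by rw [Subgroup.closure_closure_coe_preimage]; trivial)
  have hcosets := finite_image_smul_of_mul_singleton_subset hC hΛg
    (finite_image_smul_of_totallyBounded hTB hx₀)
  rw [MulAction.Quotient.smul_mk, smul_eq_mul, inv_mul_cancel] at hcosets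
  obtain ⟨F, hFS, hF, hSF⟩ := exists_finite_subset_mul_of_finite_image_smul hcosets
  have hcover := subset_image_mul_of_preimage_subset_mul Subgroup.subset_closure hSF
  have hgen := Subgroup.closure_eq_closure_union_of_subset_mul (Set.image_subset_iff.2 hFS) hQΛ
    hcover
  exact ⟨(Subgroup.fg_iff _).2 ⟨_, hgen.symm, (hF.image _).union hQfin⟩, _, hF.image _, hcover⟩
end Statement19Aux
end
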